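/- Suppose x* ∈ ℝⁿ, I = supp(Ψᵀx*), and there exist y ∈ ∂‖·‖₁(Ψᵀx*) and β ∈ ℝ^m with Ψy = Φᵀβ. Then for every δ > 0 and b with ‖Φx* − b‖₂ ≤ δ, every minimizer x_δ of ‖Ψᵀx‖₁ subject to ‖Φx − b‖₂ ≤ δ satisfies the Bregman-distance bound d_y(x_δ, x*) := ‖Ψᵀx_δ‖₁ − ‖Ψᵀx*‖₁ − ⟨Ψy, x_δ − x*⟩ ≤ 2δ‖β‖₂. -/

import Mathlib

open Matrix

/-- ℓ₁ norm of a finite real vector. -/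
noncomputable def l1 {k : ℕ} (v : Fin k → ℝ) : ℝ := ∑ i, |v i|

/-- ℓ₂ (Euclidean) norm of a finite real vector. -/
noncomputable def l2 {k : ℕ} (v : Fin k → ℝ) : ℝ := Real.sqrt (∑ i, (v i) ^ 2)

/-- ℓ₁ norm of the subvector indexed by `S`. -/
noncomputable def l1S {k : ℕ} (S : Finset (Fin k)) (v : Fin k → ℝ) : ℝ := ∑ i ∈ S, |v i|

/-- ℓ₂ norm of the subvector indexed by `S`. -/
noncomputable def l2S {k : ℕ} (S : Finset (Fin k)) (v : Fin k → ℝ) : ℝ :=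
  Real.sqrt (∑ i ∈ S, (v i) ^ 2)

/-- ℓ∞ norm of the subvector indexed by `S` (0 if `S` is empty). -/
noncomputable def linfS {k : ℕ} (S : Finset (Fin k)) (v : Fin k → ℝ) : ℝ := ⨆ i ∈ S, |v i|

/-!
Since `x*` is feasible, minimality of `x_δ` makes `‖Ψᵀx_δ‖₁ - ‖Ψᵀx*‖₁ ≤ 0`. The source condition
`Ψy = Φᵀβ` turns the linear term into `⟨β, Φ(x_δ - x*)⟩`, and `‖Φ(x_δ - x*)‖₂ ≤ 2δ` because both
points lie in the `δ`-ball around `b`; Cauchy–Schwarz concludes.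
-/

section l2

variable {k : ℕ}

lemma l2_eq_norm (v : Fin k → ℝ) : l2 v = ‖WithLp.toLp 2 v‖ := by
  simp [l2, EuclideanSpace.norm_eq, Real.norm_eq_abs, sq_abs]

lemma l2_nonneg (v : Fin k → ℝ) : 0 ≤ l2 v :=
  Real.sqrt_nonneg _

lemma abs_dotProduct_le_l2_mul_l2 (v w : Fin k → ℝ) : |v ⬝ᵥ w| ≤ l2 v * l2 w := by
  have h := abs_real_inner_le_norm (WithLp.toLp 2 v) (WithLp.toLp 2 w)
  rw [l2_eq_norm, l2_eq_norm]
  simpa [PiLp.inner_apply, dotProduct, mul_comm] using h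

lemma l2_sub_le (v w : Fin k → ℝ) : l2 (v - w) ≤ l2 v + l2 w := by
  simpa only [l2_eq_norm, WithLp.toLp_sub] using norm_sub_le (WithLp.toLp 2 v) (WithLp.toLp 2 w)

end l2

lemma l2_mulVec_sub_le {m n : ℕ} (Φ : Matrix (Fin m) (Fin n) ℝ) {u v : Fin n → ℝ}
    {b : Fin m → ℝ} {δ : ℝ} (hu : l2 (Φ *ᵥ u - b) ≤ δ) (hv : l2 (Φ *ᵥ v - b) ≤ δ) :
    l2 (Φ *ᵥ (u - v)) ≤ 2 * δ := by
  have hsplit : Φ *ᵥ (u - v) = (Φ *ᵥ u - b) - (Φ *ᵥ v - b) := by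
    rw [mulVec_sub]; abel
  rw [hsplit]
  linarith [l2_sub_le (Φ *ᵥ u - b) (Φ *ᵥ v - b)]

lemma abs_transpose_mulVec_dotProduct_sub_le {m n : ℕ} (Φ : Matrix (Fin m) (Fin n) ℝ)
    (β : Fin m → ℝ) {u v : Fin n → ℝ} {b : Fin m → ℝ} {δ : ℝ}
    (hu : l2 (Φ *ᵥ u - b) ≤ δ) (hv : l2 (Φ *ᵥ v - b) ≤ δ) :
    |(Φᵀ *ᵥ β) ⬝ᵥ (u - v)| ≤ 2 * δ * l2 β := by
  rw [mulVec_transpose, ← dotProduct_mulVec]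
  calc |β ⬝ᵥ Φ *ᵥ (u - v)| ≤ l2 β * l2 (Φ *ᵥ (u - v)) := abs_dotProduct_le_l2_mul_l2 _ _
    _ ≤ l2 β * (2 * δ) := mul_le_mul_of_nonneg_left (l2_mulVec_sub_le Φ hu hv) (l2_nonneg β)
    _ = 2 * δ * l2 β := by ring

theorem stmt7_general {m n l : ℕ} (Φ : Matrix (Fin m) (Fin n) ℝ) (Ψ : Matrix (Fin n) (Fin l) ℝ)
    (xs : Fin n → ℝ)
    (y : Fin l → ℝ)
    (β : Fin m → ℝ) (hβ : Ψ.mulVec y = Φ.transpose.mulVec β) :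
    ∀ δ : ℝ, 0 < δ → ∀ b : Fin m → ℝ, l2 (Φ.mulVec xs - b) ≤ δ →
      ∀ xδ : Fin n → ℝ, l2 (Φ.mulVec xδ - b) ≤ δ →
        (∀ z, l2 (Φ.mulVec z - b) ≤ δ →
          l1 (Ψ.transpose.mulVec xδ) ≤ l1 (Ψ.transpose.mulVec z)) →
        l1 (Ψ.transpose.mulVec xδ) - l1 (Ψ.transpose.mulVec xs)
            - ∑ j, Ψ.mulVec y j * (xδ j - xs j) ≤ 2 * δ * l2 β := by
  intro δ _ b hxs xδ hxδ hmin
  have hl1 : l1 (Ψᵀ *ᵥ xδ) ≤ l1 (Ψᵀ *ᵥ xs) := hmin xs hxs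
  have hlin : |(Ψ *ᵥ y) ⬝ᵥ (xδ - xs)| ≤ 2 * δ * l2 β := by
    rw [hβ]
    exact abs_transpose_mulVec_dotProduct_sub_le Φ β hxδ hxs
  have hpair : ∑ j, (Ψ *ᵥ y) j * (xδ j - xs j) = (Ψ *ᵥ y) ⬝ᵥ (xδ - xs) := rfl
  linarith [neg_abs_le ((Ψ *ᵥ y) ⬝ᵥ (xδ - xs))]

/-- Bregman distance bound for the constrained problem. -/
theorem stmt7 {m n l : ℕ} (Φ : Matrix (Fin m) (Fin n) ℝ) (Ψ : Matrix (Fin n) (Fin l) ℝ)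
    (xs : Fin n → ℝ)
    (y : Fin l → ℝ)
    (hy : ∀ i, (Ψ.transpose.mulVec xs i ≠ 0 → y i = Real.sign (Ψ.transpose.mulVec xs i))
      ∧ |y i| ≤ 1)
    (β : Fin m → ℝ) (hβ : Ψ.mulVec y = Φ.transpose.mulVec β) :
    ∀ δ : ℝ, 0 < δ → ∀ b : Fin m → ℝ, l2 (Φ.mulVec xs - b) ≤ δ →
      ∀ xδ : Fin n → ℝ, l2 (Φ.mulVec xδ - b) ≤ δ →
        (∀ z, l2 (Φ.mulVec z - b) ≤ δ →
          l1 (Ψ.transpose.mulVec xδ) ≤ l1 (Ψ.transpose.mulVec z)) →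
        l1 (Ψ.transpose.mulVec xδ) - l1 (Ψ.transpose.mulVec xs)
            - ∑ j, Ψ.mulVec y j * (xδ j - xs j) ≤ 2 * δ * l2 β :=
  stmt7_general Φ Ψ xs y β hβ
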